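/- (Theorem, minimality of the θ-family) Let U ⊆ ℂ be open, θ ∈ ℝ fixed, and let μ, a : U → ℂ be real-differentiable with μ(w) ≠ 0 for all w ∈ U. Then ∂_{w̄}(μ·W(a, e^{iθ}a)) = 0 at every point of U (i.e., each surface F(θ;·) of the θ-family determined by f_w = μW(a, e^{iθ}a) is minimal) if and only if a and μ are holomorphic functions on U. -/

import Mathlib

open Complex ComplexConjugate

/-!
By the Cauchy–Riemann equations, `∂_{w̄} g = 0` at a point where `g` is real-differentiable
exactly when `g` is complex-differentiable there. For `g = μ W(a, b)` one has
`μ = (g₁ - i g₂) / 2` and `μ a = (g₀ + g₃) / 2` whatever `b` is, so holomorphy of `g` gives that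
of `μ` and of `μ a`, hence of `a = (μ a) / μ` since `μ ≠ 0`. Conversely, `μ W(a, e^{iθ} a)` is
polynomial in `μ` and `a`.
-/

/-- The Weierstrass vector `W(a,b) = (a+b, 1+ab, i(1-ab), a-b) ∈ ℂ⁴`. -/
noncomputable def W (a b : ℂ) : Fin 4 → ℂ := ![a + b, 1 + a * b, I * (1 - a * b), a - b]

/-- The Wirtinger derivative `g_{w̄} = (1/2)(g_u + i g_v)` of a map `g : ℂ → E`. -/
noncomputable def wdbar {E : Type*} [NormedAddCommGroup E] [NormedSpace ℂ E]
    (g : ℂ → E) (w : ℂ) : E :=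
  (2⁻¹ : ℂ) • (fderiv ℝ g w 1 + Complex.I • fderiv ℝ g w Complex.I)

lemma add_I_smul_eq_zero_iff {E : Type*} [AddCommGroup E] [Module ℂ E] {u v : E} :
    u + I • v = 0 ↔ v = I • u := by
  constructor
  · intro h
    have h' := congrArg (I • ·) h
    simp only [smul_add, smul_smul, I_mul_I, neg_one_smul, smul_zero] at h'
    exact (sub_eq_zero.mp (by rwa [sub_eq_add_neg])).symm
  · rintro rfl
    rw [smul_smul, I_mul_I, neg_one_smul, add_neg_cancel]

lemma wdbar_eq_zero_iff {E : Type*} [NormedAddCommGroup E] [NormedSpace ℂ E]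
    {g : ℂ → E} {w : ℂ} (hg : DifferentiableAt ℝ g w) :
    wdbar g w = 0 ↔ DifferentiableAt ℂ g w := by
  rw [differentiableAt_complex_iff_differentiableAt_real, wdbar, smul_eq_zero,
    add_I_smul_eq_zero_iff]
  simp [hg]

lemma W_one_sub_I_mul_W_two (a b : ℂ) : W a b 1 - I * W a b 2 = 2 := by
  simp only [W, Matrix.cons_val_one, Matrix.cons_val_two, Matrix.cons_val_zero, Matrix.head_cons,
    Matrix.tail_cons]
  linear_combination (a * b - 1) * I_sq

lemma W_zero_add_W_three (a b : ℂ) : W a b 0 + W a b 3 = 2 * a := by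
  simp only [W, Matrix.cons_val_zero, Matrix.cons_val_three, Matrix.tail_cons, Matrix.head_cons]
  ring

lemma DifferentiableAt.smul_W {𝕜 : Type*} [NontriviallyNormedField 𝕜] [NormedAlgebra 𝕜 ℂ]
    {μ a b : ℂ → ℂ} {w : ℂ} (hμ : DifferentiableAt 𝕜 μ w) (ha : DifferentiableAt 𝕜 a w)
    (hb : DifferentiableAt 𝕜 b w) :
    DifferentiableAt 𝕜 (fun z => μ z • W (a z) (b z)) w := by
  refine differentiableAt_pi.mpr fun i => ?_
  simp only [Pi.smul_apply, smul_eq_mul, W]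
  fin_cases i <;>
    simp only [Fin.zero_eta, Fin.mk_one, Fin.reduceFinMk, Matrix.cons_val, Matrix.cons_val_zero,
      Matrix.cons_val_one] <;>
    fun_prop

lemma differentiableAt_of_smul_W {μ a b : ℂ → ℂ} {w : ℂ}
    (h : DifferentiableAt ℂ (fun z => μ z • W (a z) (b z)) w) (hμ0 : μ w ≠ 0) :
    DifferentiableAt ℂ a w ∧ DifferentiableAt ℂ μ w := by
  have hcomp (i : Fin 4) : DifferentiableAt ℂ (fun z => μ z * W (a z) (b z) i) w :=
    differentiableAt_pi.mp h i
  have hμ : DifferentiableAt ℂ μ w := by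
    have hμ_eq : μ = fun z => (μ z * W (a z) (b z) 1 - I * (μ z * W (a z) (b z) 2)) / 2 := by
      funext z
      linear_combination (-μ z / 2) * W_one_sub_I_mul_W_two (a z) (b z)
    rw [hμ_eq]
    exact ((hcomp 1).sub ((hcomp 2).const_mul I)).div_const 2
  have hμa : DifferentiableAt ℂ (fun z => μ z * a z) w := by
    have hμa_eq : (fun z => μ z * a z) =
        fun z => (μ z * W (a z) (b z) 0 + μ z * W (a z) (b z) 3) / 2 := by
      funext z
      linear_combination (-μ z / 2) * W_zero_add_W_three (a z) (b z)
    rw [hμa_eq]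
    exact ((hcomp 0).add (hcomp 3)).div_const 2
  have ha_eq : (fun z => μ z * a z / μ z) =ᶠ[nhds w] a := by
    filter_upwards [hμ.continuousAt.eventually_ne hμ0] with z hz
    field_simp
  exact ⟨(hμa.div hμ hμ0).congr_of_eventuallyEq ha_eq.symm, hμ⟩

lemma wdbar_smul_W_mul_eq_zero_iff {μ a : ℂ → ℂ} {w : ℂ} (c : ℂ)
    (hμ : DifferentiableAt ℝ μ w) (ha : DifferentiableAt ℝ a w) (hμ0 : μ w ≠ 0) :
    wdbar (fun z => μ z • W (a z) (c * a z)) w = 0 ↔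
      DifferentiableAt ℂ a w ∧ DifferentiableAt ℂ μ w := by
  rw [wdbar_eq_zero_iff (hμ.smul_W ha (ha.const_mul c))]
  exact ⟨(differentiableAt_of_smul_W · hμ0),
    fun ⟨ha, hμ⟩ => hμ.smul_W ha (ha.const_mul c)⟩

theorem stmt_9_general (U : Set ℂ) (θ : ℝ) (μ a : ℂ → ℂ)
    (hμd : ∀ w ∈ U, DifferentiableAt ℝ μ w)
    (had : ∀ w ∈ U, DifferentiableAt ℝ a w)
    (hμ0 : ∀ w ∈ U, μ w ≠ 0) :
    (∀ w ∈ U, wdbar (fun z => μ z • W (a z) (Complex.exp (θ * I) * a z)) w = 0) ↔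
      ((∀ w ∈ U, DifferentiableAt ℂ a w) ∧ (∀ w ∈ U, DifferentiableAt ℂ μ w)) := by
  rw [← forall₂_and]
  exact forall₂_congr fun w hw =>
    wdbar_smul_W_mul_eq_zero_iff _ (hμd w hw) (had w hw) (hμ0 w hw)

/-- minimality of the θ-family: for fixed `θ` and real-differentiable
`μ, a` on open `U` with `μ ≠ 0`, one has `∂_{w̄}(μ·W(a, e^{iθ}a)) = 0` on `U` (each
member of the θ-family is minimal) iff `a` and `μ` are holomorphic on `U`. -/
theorem stmt_9 (U : Set ℂ) (hU : IsOpen U) (θ : ℝ) (μ a : ℂ → ℂ)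
    (hμd : ∀ w ∈ U, DifferentiableAt ℝ μ w)
    (had : ∀ w ∈ U, DifferentiableAt ℝ a w)
    (hμ0 : ∀ w ∈ U, μ w ≠ 0) :
    (∀ w ∈ U, wdbar (fun z => μ z • W (a z) (Complex.exp (θ * I) * a z)) w = 0) ↔
      ((∀ w ∈ U, DifferentiableAt ℂ a w) ∧ (∀ w ∈ U, DifferentiableAt ℂ μ w)) :=
  stmt_9_general U θ μ a hμd had hμ0
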